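/- arXiv:1912.01528 — 4 statements merged into one kernel-verified Lean document; each statement's English description precedes it below -/
import Mathlib

section
/- Let 0 < ζ ≤ 1 and μ > 1 be fixed. Then there exists a constant C₁ > 0 such that for every t > 0 one has ∫₀^t ⟨t−s⟩^{−ζ} ⟨s⟩^{−μ} ds < ∫₀^∞ ⟨t−s⟩^{−ζ} ⟨s⟩^{−μ} ds ≤ C₁ ⟨t⟩^{−ζ}. -/
/-!
Write `⟨x⟩ = √(1 + x²)`. Since `⟨t⟩ ≤ ⟨t - s⟩ + ⟨s⟩`, the larger of `⟨t - s⟩` and `⟨s⟩` is at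
least `⟨t⟩ / 2`. If it is `⟨t - s⟩`, the integrand is at most `2^ζ ⟨t⟩^{-ζ} ⟨s⟩^{-μ}`; if it is
`⟨s⟩`, splitting `⟨s⟩^{-μ} = ⟨s⟩^{-ζ} ⟨s⟩^{-(μ-ζ)}` (here `ζ ≤ μ`) bounds it by
`2^ζ ⟨t⟩^{-ζ} ⟨t - s⟩^{-μ}`. Both majorants are integrable over all of `ℝ` because `μ > 1`, so
`C₁ = 2^{ζ+1} ∫ ⟨s⟩^{-μ} ds` works. The strict inequality holds because the integrand is
positive on `[t, ∞)`.
-/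

open MeasureTheory Set

theorem rpow_neg_mul_rpow_neg_le {a b c ζ μ : ℝ} (ha : 0 < a) (hb : 0 < b) (hc : 0 < c)
    (habc : c ≤ max a b) (hζ : 0 ≤ ζ) (hζμ : ζ ≤ μ) :
    a ^ (-ζ) * b ^ (-μ) ≤ c ^ (-ζ) * (a ^ (-μ) + b ^ (-μ)) := by
  have hζ' : -ζ ≤ 0 := neg_nonpos.2 hζ
  rcases le_total b a with hba | hab
  · have hca : c ≤ a := habc.trans (max_eq_left hba).le
    calc a ^ (-ζ) * b ^ (-μ) ≤ c ^ (-ζ) * b ^ (-μ) :=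
          mul_le_mul_of_nonneg_right (Real.rpow_le_rpow_of_nonpos hc hca hζ') (by positivity)
      _ ≤ c ^ (-ζ) * (a ^ (-μ) + b ^ (-μ)) :=
          mul_le_mul_of_nonneg_left (le_add_of_nonneg_left (by positivity)) (by positivity)
  · have hcb : c ≤ b := habc.trans (max_eq_right hab).le
    have hsplit : b ^ (-μ) ≤ c ^ (-ζ) * a ^ (-(μ - ζ)) := by
      rw [show -μ = -ζ + -(μ - ζ) by ring, Real.rpow_add hb]
      exact mul_le_mul (Real.rpow_le_rpow_of_nonpos hc hcb hζ')
        (Real.rpow_le_rpow_of_nonpos ha hab (by linarith)) (by positivity) (by positivity)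
    calc a ^ (-ζ) * b ^ (-μ) ≤ a ^ (-ζ) * (c ^ (-ζ) * a ^ (-(μ - ζ))) :=
          mul_le_mul_of_nonneg_left hsplit (by positivity)
      _ = c ^ (-ζ) * a ^ (-μ) := by
          rw [mul_left_comm, ← Real.rpow_add ha]
          ring_nf
      _ ≤ c ^ (-ζ) * (a ^ (-μ) + b ^ (-μ)) :=
          mul_le_mul_of_nonneg_left (le_add_of_nonneg_right (by positivity)) (by positivity)

theorem sqrt_one_add_sq_add_le (x y : ℝ) :
    √(1 + (x + y) ^ 2) ≤ √(1 + x ^ 2) + √(1 + y ^ 2) := by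
  have hx : |x| ≤ √(1 + x ^ 2) := by
    rw [← Real.sqrt_sq_eq_abs]; exact Real.sqrt_le_sqrt (by linarith)
  have hy : |y| ≤ √(1 + y ^ 2) := by
    rw [← Real.sqrt_sq_eq_abs]; exact Real.sqrt_le_sqrt (by linarith)
  rw [Real.sqrt_le_left (by positivity)]
  nlinarith [Real.sq_sqrt (by positivity : (0 : ℝ) ≤ 1 + x ^ 2),
    Real.sq_sqrt (by positivity : (0 : ℝ) ≤ 1 + y ^ 2), le_abs_self (x * y), abs_mul x y,
    mul_le_mul hx hy (abs_nonneg y) (Real.sqrt_nonneg _)]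

theorem sqrt_one_add_sq_rpow_neg_mul_le {ζ μ : ℝ} (hζ : 0 ≤ ζ) (hζμ : ζ ≤ μ) (s t : ℝ) :
    √(1 + (t - s) ^ 2) ^ (-ζ) * √(1 + s ^ 2) ^ (-μ) ≤
      2 ^ ζ * √(1 + t ^ 2) ^ (-ζ) * (√(1 + (t - s) ^ 2) ^ (-μ) + √(1 + s ^ 2) ^ (-μ)) := by
  have hmax : √(1 + t ^ 2) / 2 ≤ max √(1 + (t - s) ^ 2) √(1 + s ^ 2) := by
    have := sqrt_one_add_sq_add_le (t - s) s
    rw [sub_add_cancel] at this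
    linarith [le_max_left √(1 + (t - s) ^ 2) √(1 + s ^ 2),
      le_max_right √(1 + (t - s) ^ 2) √(1 + s ^ 2)]
  have hhalf : (√(1 + t ^ 2) / 2) ^ (-ζ) = 2 ^ ζ * √(1 + t ^ 2) ^ (-ζ) := by
    rw [Real.div_rpow (by positivity) zero_le_two, Real.rpow_neg zero_le_two, div_inv_eq_mul,
      mul_comm]
  rw [← hhalf]
  exact rpow_neg_mul_rpow_neg_le (by positivity) (by positivity) (by positivity) hmax hζ hζμ

theorem integrable_sqrt_one_add_sq_rpow_neg {μ : ℝ} (hμ : 1 < μ) :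
    Integrable (fun s : ℝ => √(1 + s ^ 2) ^ (-μ)) := by
  have h := integrable_rpow_neg_one_add_norm_sq (E := ℝ) (μ := volume) (r := μ)
    (by simpa using hμ)
  refine h.congr (ae_of_all _ fun s => ?_)
  dsimp only
  rw [Real.norm_eq_abs, sq_abs, Real.sqrt_eq_rpow, ← Real.rpow_mul (by positivity)]
  ring_nf

theorem setIntegral_Ioo_lt_setIntegral_Ioi {f : ℝ → ℝ} {a b : ℝ} (hf : IntegrableOn f (Ioi a))
    (hab : a < b) (hpos : ∀ x, b ≤ x → 0 < f x) :
    ∫ x in Ioo a b, f x < ∫ x in Ioi a, f x := by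
  have hunion : Ioo a b ∪ Ici b = Ioi a := Ioo_union_Ici_eq_Ioi hab
  have htail : IntegrableOn f (Ici b) := hf.mono_set (hunion ▸ subset_union_right)
  have htail_pos : 0 < ∫ x in Ici b, f x := by
    rw [setIntegral_pos_iff_support_of_nonneg_ae
      ((ae_restrict_iff' measurableSet_Ici).2 (ae_of_all _ fun x hx => (hpos x hx).le)) htail,
      inter_eq_self_of_subset_right
        (show Ici b ⊆ Function.support f from fun x hx => (hpos x hx).ne'), Real.volume_Ici]
    exact ENNReal.zero_lt_top
  rw [← hunion, setIntegral_union ((Iio_disjoint_Ici le_rfl).mono_left Ioo_subset_Iio_self)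
    measurableSet_Ici (hf.mono_set (hunion ▸ subset_union_left)) htail]
  linarith

/-- Lemma `sti.int`: for `0 < ζ ≤ 1` and `μ > 1` there is `C₁ > 0` such that for all `t > 0`,
`∫₀^t ⟨t-s⟩^{-ζ} ⟨s⟩^{-μ} ds < ∫₀^∞ ⟨t-s⟩^{-ζ} ⟨s⟩^{-μ} ds ≤ C₁ ⟨t⟩^{-ζ}`,
where `⟨x⟩ = √(1+x²)`. -/
theorem convolution_decay_integral (ζ μ : ℝ) (hζ0 : 0 < ζ) (hζ1 : ζ ≤ 1) (hμ : 1 < μ) :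
    ∃ C₁ : ℝ, 0 < C₁ ∧ ∀ t : ℝ, 0 < t →
      (∫ s in Set.Ioo (0 : ℝ) t,
          Real.sqrt (1 + (t - s) ^ 2) ^ (-ζ) * Real.sqrt (1 + s ^ 2) ^ (-μ))
        < (∫ s in Set.Ioi (0 : ℝ),
          Real.sqrt (1 + (t - s) ^ 2) ^ (-ζ) * Real.sqrt (1 + s ^ 2) ^ (-μ)) ∧
      (∫ s in Set.Ioi (0 : ℝ),
          Real.sqrt (1 + (t - s) ^ 2) ^ (-ζ) * Real.sqrt (1 + s ^ 2) ^ (-μ))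
        ≤ C₁ * Real.sqrt (1 + t ^ 2) ^ (-ζ) := by
  have hint := integrable_sqrt_one_add_sq_rpow_neg hμ
  set K := ∫ s, √(1 + s ^ 2) ^ (-μ)
  have hK : 0 < K := integral_pos_of_integrable_nonneg_nonzero (x := 0)
    (Continuous.rpow_const (by fun_prop) fun _ => Or.inl (by positivity))
    hint (fun _ => by positivity) (by positivity)
  have hpoint := sqrt_one_add_sq_rpow_neg_mul_le hζ0.le (hζ1.trans hμ.le)
  refine ⟨2 ^ ζ * (2 * K), by positivity, fun t ht => ?_⟩
  have hg : Integrable fun s =>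
      2 ^ ζ * √(1 + t ^ 2) ^ (-ζ) * (√(1 + (t - s) ^ 2) ^ (-μ) + √(1 + s ^ 2) ^ (-μ)) :=
    ((hint.comp_sub_left t).add hint).const_mul _
  have hf : Integrable fun s => √(1 + (t - s) ^ 2) ^ (-ζ) * √(1 + s ^ 2) ^ (-μ) :=
    hg.mono' (by fun_prop) (ae_of_all _ fun s => by
      rw [Real.norm_of_nonneg (by positivity)]; exact hpoint s t)
  refine ⟨setIntegral_Ioo_lt_setIntegral_Ioi hf.integrableOn ht fun s _ => by positivity, ?_⟩
  calc _ ≤ ∫ s, √(1 + (t - s) ^ 2) ^ (-ζ) * √(1 + s ^ 2) ^ (-μ) :=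
        setIntegral_le_integral hf (ae_of_all _ fun _ => by positivity)
    _ ≤ _ := integral_mono hf hg (hpoint · t)
    _ = 2 ^ ζ * (2 * K) * √(1 + t ^ 2) ^ (-ζ) := by
        rw [integral_const_mul, integral_add (hint.comp_sub_left t) hint,
          integral_sub_left_eq_self (fun s => √(1 + s ^ 2) ^ (-μ))]
        ring
end

section
/- Let H be a bounded self-adjoint operator on ℓ²(ℤ), let p > 5 and 1/(p−2) < ζ < 1/3, and suppose K₁ > 0 is such that ‖e^{−itH} φ‖_{ℓ^∞(ℤ)} ≤ K₁ ⟨t⟩^{−ζ} ‖φ‖_{ℓ¹(ℤ)} for all φ ∈ ℓ¹(ℤ) and all t ∈ ℝ. Let C₁ > 0 be a constant such that ∫₀^∞ ⟨t−s⟩^{−ζ} ⟨s⟩^{−ζ(p−2)} ds ≤ C₁ ⟨t⟩^{−ζ} for all t > 0. Define M := 4 K₁ and δ_* := (C₁ M^{p−2})^{−1/(p−1)}. Suppose q : [0, T] → ℓ²(ℤ) solves i q̇_n = (H q)_n ± |q_n|^{p−1} q_n with initial datum φ = q(0) satisfying δ₀ := ‖φ‖_{ℓ¹(ℤ)} < δ_*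 and ‖φ‖_{ℓ²(ℤ)} ≤ δ₀, the solution conserves the ℓ² norm, and sup_{0 ≤ t ≤ T} ⟨t⟩^{ζ} ‖q(t)‖_{ℓ^∞(ℤ)} ≤ M δ₀. Then in fact sup_{0 ≤ t ≤ T} ⟨t⟩^{ζ} ‖q(t)‖_{ℓ^∞(ℤ)} ≤ (M/2) δ₀. -/
/-!
Write `q(t) = U(t) φ + ∫₀ᵗ U(t - s) f(q(s)) ds`. Interpolating the bootstrap bound
`‖q(s)‖_∞ ≤ M δ₀ ⟨s⟩^{-ζ}` with `ℓ²` conservation gives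
`‖f(q(s))‖_{ℓ¹} ≤ ‖q(s)‖_∞^{p-2} ‖q(s)‖₂² ≤ (M δ₀)^{p-2} δ₀² ⟨s⟩^{-ζ(p-2)}`, and `ζ(p-2) > 1` makes
this weight integrable. The dispersive estimate bounds the free part by `K₁ δ₀ ⟨t⟩^{-ζ}` and,
through the convolution estimate, the Duhamel term by `K₁ C₁ (M δ₀)^{p-2} δ₀² ⟨t⟩^{-ζ}`. The
condition `δ₀ < δ_*` amounts to `C₁ (M δ₀)^{p-2} δ₀ < 1`, so the sum is at most
`2 K₁ δ₀ ⟨t⟩^{-ζ} = (M/2) δ₀ ⟨t⟩^{-ζ}`.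
-/

open MeasureTheory Set Filter
open scoped ENNReal

theorem one_le_sqrt_one_add_sq (t : ℝ) : 1 ≤ √(1 + t ^ 2) :=
  Real.one_le_sqrt.2 (by nlinarith)

theorem Continuous.sqrt_one_add_sq_rpow {f : ℝ → ℝ} (hf : Continuous f) (b : ℝ) :
    Continuous fun s => √(1 + f s ^ 2) ^ b :=
  (by fun_prop : Continuous fun s => √(1 + f s ^ 2)).rpow_const fun _ => Or.inl (by positivity)

theorem sqrt_one_add_sq_rpow_neg_eq (t a : ℝ) :
    √(1 + t ^ 2) ^ (-a) = (1 + ‖t‖ ^ 2) ^ (-a / 2) := by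
  rw [Real.norm_eq_abs, sq_abs, Real.sqrt_eq_rpow, ← Real.rpow_mul (by positivity)]
  ring_nf

theorem le_mul_rpow_neg_iff {x y c ζ : ℝ} (hc : 0 < c) : x ≤ y * c ^ (-ζ) ↔ c ^ ζ * x ≤ y := by
  rw [Real.rpow_neg hc.le, ← div_eq_mul_inv, le_div_iff₀ (by positivity), mul_comm]

theorem integrable_sqrt_one_add_sq_rpow_neg_mul {ζ a : ℝ} (hζ : 0 ≤ ζ) (ha : 1 < a) (t : ℝ) :
    Integrable fun s : ℝ => √(1 + (t - s) ^ 2) ^ (-ζ) * √(1 + s ^ 2) ^ (-a) := by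
  have hint : Integrable fun s : ℝ => √(1 + s ^ 2) ^ (-a) := by
    simp_rw [sqrt_one_add_sq_rpow_neg_eq]
    exact integrable_rpow_neg_one_add_norm_sq (by simpa using ha)
  refine hint.bdd_mul (c := 1)
    ((continuous_sub_left t).sqrt_one_add_sq_rpow _).aestronglyMeasurable
    (Eventually.of_forall fun s => ?_)
  rw [Real.norm_of_nonneg (by positivity)]
  exact Real.rpow_le_one_of_one_le_of_nonpos (one_le_sqrt_one_add_sq _) (by linarith)

theorem intervalIntegral_sqrt_one_add_sq_rpow_neg_mul_le {ζ a C t : ℝ} (hζ : 0 ≤ ζ) (ha : 1 < a)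
    (hC : 0 ≤ C) (ht : 0 ≤ t)
    (hconv : 0 < t → ∫ s in Ioi 0, √(1 + (t - s) ^ 2) ^ (-ζ) * √(1 + s ^ 2) ^ (-a)
      ≤ C * √(1 + t ^ 2) ^ (-ζ)) :
    ∫ s in 0..t, √(1 + (t - s) ^ 2) ^ (-ζ) * √(1 + s ^ 2) ^ (-a) ≤ C * √(1 + t ^ 2) ^ (-ζ) := by
  rcases ht.eq_or_lt with rfl | ht
  · rw [intervalIntegral.integral_same]
    positivity
  · rw [intervalIntegral.integral_of_le ht.le]
    exact (setIntegral_mono_set (integrable_sqrt_one_add_sq_rpow_neg_mul hζ ha t).integrableOn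
      (ae_of_all _ fun s => by positivity) Ioc_subset_Ioi_self.eventuallyLE).trans (hconv ht)

theorem mul_rpow_le_one_of_le_rpow_neg_one_div {a δ r : ℝ} (ha : 0 < a) (hδ : 0 ≤ δ)
    (hr : 0 < r) (h : δ ≤ a ^ (-(1 / r))) : a * δ ^ r ≤ 1 := by
  calc a * δ ^ r ≤ a * (a ^ (-(1 / r))) ^ r := by gcongr
    _ = 1 := by
      rw [← Real.rpow_mul ha.le, neg_mul, one_div_mul_cancel hr.ne', Real.rpow_neg_one,
        mul_inv_cancel₀ ha.ne']

theorem mul_mul_rpow_mul_sq_le_self {C M δ p : ℝ} (hC : 0 < C) (hM : 0 < M) (hδ : 0 ≤ δ)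
    (hp : 1 < p) (hsmall : δ ≤ (C * M ^ (p - 2)) ^ (-(1 / (p - 1)))) :
    C * (M * δ) ^ (p - 2) * δ ^ 2 ≤ δ := by
  have hprod : C * M ^ (p - 2) * δ ^ (p - 1) ≤ 1 :=
    mul_rpow_le_one_of_le_rpow_neg_one_div (by positivity) hδ (by linarith) hsmall
  have hexp : δ ^ (p - 1) = δ ^ (p - 2) * δ := by
    rw [← Real.rpow_add_one' hδ (by linarith)]
    ring_nf
  calc C * (M * δ) ^ (p - 2) * δ ^ 2 = C * M ^ (p - 2) * δ ^ (p - 1) * δ := by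
        rw [Real.mul_rpow hM.le hδ, hexp]
        ring
    _ ≤ δ := mul_le_of_le_one_left hδ hprod

theorem norm_mul_rpow_sub_one_mul_self {ε : ℂ} (hε : ‖ε‖ = 1) {p : ℝ} (hp : p ≠ 0) (z : ℂ) :
    ‖ε * ((‖z‖ ^ (p - 1) : ℝ) : ℂ) * z‖ = ‖z‖ ^ p := by
  rw [norm_mul, norm_mul, hε, one_mul, Complex.norm_real, Real.norm_of_nonneg (by positivity),
    ← Real.rpow_add_one' (norm_nonneg _) (by simpa using hp), sub_add_cancel]

namespace lp

variable {ι : Type*} {E : ι → Type*} [∀ i, NormedAddCommGroup (E i)] {p : ℝ≥0∞}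

theorem bddAbove_range_norm_apply (hp : p ≠ 0) (f : lp E p) :
    BddAbove (range fun i => ‖f i‖) :=
  ⟨‖f‖, by rintro _ ⟨i, rfl⟩; exact norm_apply_le_norm hp f i⟩

theorem summable_norm_rpow_and_tsum_le (f : lp E 2) {A r : ℝ} (hr : 2 ≤ r)
    (hA : ∀ i, ‖f i‖ ≤ A) :
    Summable (fun i => ‖f i‖ ^ r) ∧ ∑' i, ‖f i‖ ^ r ≤ A ^ (r - 2) * ‖f‖ ^ 2 := by
  have hsq : HasSum (fun i => ‖f i‖ ^ 2) (‖f‖ ^ 2) := by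
    simpa using lp.hasSum_norm (p := 2) (by norm_num) f
  have hle : ∀ i, ‖f i‖ ^ r ≤ A ^ (r - 2) * ‖f i‖ ^ 2 := fun i => by
    calc ‖f i‖ ^ r = ‖f i‖ ^ (r - 2) * ‖f i‖ ^ 2 := by
          rw [← Real.rpow_natCast, ← Real.rpow_add' (norm_nonneg _) (by simp; linarith)]
          norm_num
      _ ≤ A ^ (r - 2) * ‖f i‖ ^ 2 := by
          gcongr
          exact hA i
  have hsum := hsq.summable.mul_left (A ^ (r - 2))
  have hsum_r := hsum.of_nonneg_of_le (fun i => by positivity) hle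
  refine ⟨hsum_r, ?_⟩
  rw [← (hsq.mul_left _).tsum_eq]
  exact hsum_r.tsum_le_tsum hle hsum

theorem summable_norm_rpow_and_tsum_le_of_decay (f : lp E 2) {r ζ c δ w : ℝ} (hr : 2 ≤ r)
    (hw : 0 < w) (hc : 0 ≤ c) (hf₂ : ‖f‖ ≤ δ) (hf_infty : w ^ ζ * ⨆ i, ‖f i‖ ≤ c) :
    Summable (fun i => ‖f i‖ ^ r) ∧
      ∑' i, ‖f i‖ ^ r ≤ c ^ (r - 2) * δ ^ 2 * w ^ (-(ζ * (r - 2))) := by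
  have hA : ∀ i, ‖f i‖ ≤ c * w ^ (-ζ) := fun i =>
    (le_ciSup (bddAbove_range_norm_apply two_ne_zero f) i).trans
      ((le_mul_rpow_neg_iff hw).2 hf_infty)
  obtain ⟨hsum, hle⟩ := summable_norm_rpow_and_tsum_le f hr hA
  refine ⟨hsum, hle.trans ?_⟩
  rw [Real.mul_rpow hc (by positivity), ← Real.rpow_mul hw.le, neg_mul, mul_right_comm]
  gcongr

variable [Fact (1 ≤ p)] [∀ i, NormedSpace ℝ (E i)] [∀ i, CompleteSpace (E i)]

theorem intervalIntegral_apply {g : ℝ → lp E p} {a b : ℝ} (hg : IntervalIntegrable g volume a b)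
    (i : ι) : (∫ s in a..b, g s) i = ∫ s in a..b, g s i :=
  ((evalCLM ℝ E p i).intervalIntegral_comp_comm hg).symm

theorem norm_intervalIntegral_apply_le {g : ℝ → lp E p} {w : ℝ → ℝ} {a b : ℝ} (hab : a ≤ b)
    (hw : IntervalIntegrable w volume a b) (i : ι) (hgw : ∀ s ∈ Icc a b, ‖g s i‖ ≤ w s) :
    ‖(∫ s in a..b, g s) i‖ ≤ ∫ s in a..b, w s := by
  by_cases hg : IntervalIntegrable g volume a b
  · have hgi : IntervalIntegrable (fun s => g s i) volume a b :=
      ⟨(evalCLM ℝ E p i).integrable_comp hg.1, (evalCLM ℝ E p i).integrable_comp hg.2⟩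
    rw [intervalIntegral_apply hg]
    exact (intervalIntegral.norm_integral_le_integral_norm hab).trans
      (intervalIntegral.integral_mono_on hab hgi.norm hw hgw)
  · rw [intervalIntegral.integral_undef hg]
    simpa using intervalIntegral.integral_nonneg hab fun s hs => (norm_nonneg _).trans (hgw s hs)

theorem norm_duhamel_apply_le (U : ℝ → lp E p → lp E p) (G : ℝ → lp E p) {K B ζ a t : ℝ}
    (hK : 0 ≤ K) (ht : 0 ≤ t)
    (hU : ∀ τ φ, Summable (fun i => ‖φ i‖) → ∀ i,
      ‖U τ φ i‖ ≤ K * √(1 + τ ^ 2) ^ (-ζ) * ∑' j, ‖φ j‖)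
    (hG : ∀ s ∈ Icc 0 t,
      Summable (fun i => ‖G s i‖) ∧ ∑' i, ‖G s i‖ ≤ B * √(1 + s ^ 2) ^ (-a))
    (i : ι) :
    ‖(∫ s in 0..t, U (t - s) (G s)) i‖
      ≤ K * B * ∫ s in 0..t, √(1 + (t - s) ^ 2) ^ (-ζ) * √(1 + s ^ 2) ^ (-a) := by
  rw [← intervalIntegral.integral_const_mul]
  have hw : Continuous fun s => K * B * (√(1 + (t - s) ^ 2) ^ (-ζ) * √(1 + s ^ 2) ^ (-a)) :=
    continuous_const.mul (((continuous_sub_left t).sqrt_one_add_sq_rpow _).mul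
      (continuous_id.sqrt_one_add_sq_rpow _))
  refine norm_intervalIntegral_apply_le ht (hw.intervalIntegrable _ _) i fun s hs => ?_
  obtain ⟨hsum, hle⟩ := hG s hs
  calc ‖U (t - s) (G s) i‖ ≤ K * √(1 + (t - s) ^ 2) ^ (-ζ) * ∑' j, ‖G s j‖ := hU _ _ hsum i
    _ ≤ K * √(1 + (t - s) ^ 2) ^ (-ζ) * (B * √(1 + s ^ 2) ^ (-a)) := by gcongr
    _ = K * B * (√(1 + (t - s) ^ 2) ^ (-ζ) * √(1 + s ^ 2) ^ (-a)) := by ring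

end lp

theorem nls_bootstrap_general
    (H : lp (fun _ : ℤ => ℂ) 2 →L[ℂ] lp (fun _ : ℤ => ℂ) 2)
    (p ζ : ℝ) (hp : 5 < p) (hζ₁ : 1 / (p - 2) < ζ)
    (K₁ : ℝ) (hK₁ : 0 < K₁)
    -- dispersive estimate for the linear flow
    (hdisp : ∀ (t : ℝ) (φ : lp (fun _ : ℤ => ℂ) 2), Summable (fun n : ℤ => ‖φ n‖) →
      (⨆ n : ℤ, ‖(NormedSpace.exp ((-(Complex.I * (t : ℂ))) • H)) φ n‖)
        ≤ K₁ / Real.sqrt (1 + t ^ 2) ^ ζ * ∑' n : ℤ, ‖φ n‖)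
    (C₁ : ℝ) (hC₁ : 0 < C₁)
    -- convolution integral estimate
    (hconv : ∀ t : ℝ, 0 < t →
      (∫ s in Set.Ioi (0 : ℝ),
          Real.sqrt (1 + (t - s) ^ 2) ^ (-ζ) * Real.sqrt (1 + s ^ 2) ^ (-(ζ * (p - 2))))
        ≤ C₁ * Real.sqrt (1 + t ^ 2) ^ (-ζ))
    (M δstar : ℝ) (hM : M = 4 * K₁)
    (hδstar : δstar = (C₁ * M ^ (p - 2)) ^ (-(1 / (p - 1))))
    (T : ℝ)
    (ε : ℂ) (hε : ε = 1 ∨ ε = -1)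
    (q F : ℝ → lp (fun _ : ℤ => ℂ) 2)
    -- `F s` is the nonlinearity `f(q(s))`, `f(u)_j = ∓ i |u_j|^{p-1} u_j`
    (hF : ∀ s ∈ Set.Icc (0 : ℝ) T, ∀ n : ℤ,
      F s n = -Complex.I * ε * ((‖q s n‖ ^ (p - 1) : ℝ) : ℂ) * q s n)
    -- `q` solves the NLS in Duhamel form on `[0,T]`
    (hduh : ∀ t ∈ Set.Icc (0 : ℝ) T,
      q t = (NormedSpace.exp ((-(Complex.I * (t : ℂ))) • H)) (q 0)
        + ∫ s in (0 : ℝ)..t,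
            (NormedSpace.exp ((-(Complex.I * ((t - s : ℝ) : ℂ))) • H)) (F s))
    -- conservation of the `ℓ²` norm
    (hcons : ∀ t ∈ Set.Icc (0 : ℝ) T, ‖q t‖ = ‖q 0‖)
    (δ₀ : ℝ)
    (hl1 : Summable (fun n : ℤ => ‖q 0 n‖))
    (hδ₀ : δ₀ = ∑' n : ℤ, ‖q 0 n‖)
    (hsmall : δ₀ < δstar)
    (hl2 : ‖q 0‖ ≤ δ₀)
    -- bootstrap assumption
    (hboot : ∀ t ∈ Set.Icc (0 : ℝ) T,
      Real.sqrt (1 + t ^ 2) ^ ζ * (⨆ n : ℤ, ‖q t n‖) ≤ M * δ₀) :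
    ∀ t ∈ Set.Icc (0 : ℝ) T,
      Real.sqrt (1 + t ^ 2) ^ ζ * (⨆ n : ℤ, ‖q t n‖) ≤ M / 2 * δ₀ := by
  have hδ₀_nonneg : 0 ≤ δ₀ := hδ₀ ▸ tsum_nonneg fun n => norm_nonneg _
  have hM_pos : 0 < M := by linarith
  have hζ : 0 ≤ ζ := ((one_div_pos.2 (by linarith)).trans hζ₁).le
  have ha : 1 < ζ * (p - 2) := by rwa [div_lt_iff₀ (by linarith)] at hζ₁
  have hU : ∀ (τ : ℝ) (φ : lp (fun _ : ℤ => ℂ) 2), Summable (fun n => ‖φ n‖) → ∀ n,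
      ‖NormedSpace.exp ((-(Complex.I * (τ : ℂ))) • H) φ n‖
        ≤ K₁ * √(1 + τ ^ 2) ^ (-ζ) * ∑' m, ‖φ m‖ := by
    intro τ φ hφ n
    rw [Real.rpow_neg (by positivity), ← div_eq_mul_inv]
    exact (le_ciSup (lp.bddAbove_range_norm_apply two_ne_zero _) n).trans (hdisp τ φ hφ)
  have hnonlin : ∀ s ∈ Icc 0 T, Summable (fun n => ‖F s n‖) ∧
      ∑' n, ‖F s n‖ ≤ (M * δ₀) ^ (p - 2) * δ₀ ^ 2 * √(1 + s ^ 2) ^ (-(ζ * (p - 2))) := by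
    intro s hs
    have hFq : (fun n => ‖F s n‖) = fun n => ‖q s n‖ ^ p := funext fun n => by
      rw [hF s hs n, norm_mul_rpow_sub_one_mul_self (by rcases hε with rfl | rfl <;> simp)
        (by linarith)]
    rw [hFq]
    exact lp.summable_norm_rpow_and_tsum_le_of_decay (q s) (by linarith) (by positivity)
      (by positivity) ((hcons s hs).trans_le hl2) (hboot s hs)
  have hδ₀_small : C₁ * (M * δ₀) ^ (p - 2) * δ₀ ^ 2 ≤ δ₀ :=
    mul_mul_rpow_mul_sq_le_self hC₁ hM_pos hδ₀_nonneg (by linarith) (hδstar ▸ hsmall.le)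
  intro t ht
  have hduhamel := lp.norm_duhamel_apply_le
    (fun τ => ⇑(NormedSpace.exp ((-(Complex.I * (τ : ℂ))) • H))) F hK₁.le ht.1 hU
    fun s hs => hnonlin s ⟨hs.1, hs.2.trans ht.2⟩
  have hweight := intervalIntegral_sqrt_one_add_sq_rpow_neg_mul_le hζ ha hC₁.le ht.1 (hconv t)
  refine (le_mul_rpow_neg_iff (by positivity)).1 (ciSup_le fun n => ?_)
  rw [hduh t ht, lp.coeFn_add, Pi.add_apply]
  calc _ ≤ _ := norm_add_le _ _
    _ ≤ K₁ * √(1 + t ^ 2) ^ (-ζ) * δ₀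
          + K₁ * ((M * δ₀) ^ (p - 2) * δ₀ ^ 2) * (C₁ * √(1 + t ^ 2) ^ (-ζ)) :=
        add_le_add (hδ₀ ▸ hU t _ hl1 n) ((hduhamel n).trans (by gcongr))
    _ = K₁ * √(1 + t ^ 2) ^ (-ζ) * (δ₀ + C₁ * (M * δ₀) ^ (p - 2) * δ₀ ^ 2) := by ring
    _ ≤ K₁ * √(1 + t ^ 2) ^ (-ζ) * (δ₀ + δ₀) := by gcongr
    _ = M / 2 * δ₀ * √(1 + t ^ 2) ^ (-ζ) := by rw [hM]; ring

/-- Bootstrap lemma (`non.est.ric`): let `H` be a bounded self-adjoint operator on `ℓ²(ℤ)`,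
`p > 5`, `1/(p-2) < ζ < 1/3`, `K₁` a dispersive constant for `e^{-itH}`, and `C₁` a constant
for the convolution integral estimate. Set `M := 4K₁` and `δ_* := (C₁ M^{p-2})^{-1/(p-1)}`.
If `q : [0,T] → ℓ²(ℤ)` solves the NLS (via the Duhamel formula), conserves the `ℓ²` norm,
has initial datum of `ℓ¹` norm `δ₀ < δ_*` with `‖φ‖_{ℓ²} ≤ δ₀`, and satisfies
`⟨t⟩^ζ ‖q(t)‖_{ℓ∞} ≤ M δ₀` on `[0,T]`, then in fact `⟨t⟩^ζ ‖q(t)‖_{ℓ∞} ≤ (M/2) δ₀` there. -/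
theorem nls_bootstrap
    (H : lp (fun _ : ℤ => ℂ) 2 →L[ℂ] lp (fun _ : ℤ => ℂ) 2)
    (hH : IsSelfAdjoint H)
    (p ζ : ℝ) (hp : 5 < p) (hζ₁ : 1 / (p - 2) < ζ) (hζ₂ : ζ < 1 / 3)
    (K₁ : ℝ) (hK₁ : 0 < K₁)
    -- dispersive estimate for the linear flow
    (hdisp : ∀ (t : ℝ) (φ : lp (fun _ : ℤ => ℂ) 2), Summable (fun n : ℤ => ‖φ n‖) →
      (⨆ n : ℤ, ‖(NormedSpace.exp ((-(Complex.I * (t : ℂ))) • H)) φ n‖)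
        ≤ K₁ / Real.sqrt (1 + t ^ 2) ^ ζ * ∑' n : ℤ, ‖φ n‖)
    (C₁ : ℝ) (hC₁ : 0 < C₁)
    -- convolution integral estimate
    (hconv : ∀ t : ℝ, 0 < t →
      (∫ s in Set.Ioi (0 : ℝ),
          Real.sqrt (1 + (t - s) ^ 2) ^ (-ζ) * Real.sqrt (1 + s ^ 2) ^ (-(ζ * (p - 2))))
        ≤ C₁ * Real.sqrt (1 + t ^ 2) ^ (-ζ))
    (M δstar : ℝ) (hM : M = 4 * K₁)
    (hδstar : δstar = (C₁ * M ^ (p - 2)) ^ (-(1 / (p - 1))))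
    (T : ℝ) (hT : 0 ≤ T)
    (ε : ℂ) (hε : ε = 1 ∨ ε = -1)
    (q F : ℝ → lp (fun _ : ℤ => ℂ) 2)
    -- `F s` is the nonlinearity `f(q(s))`, `f(u)_j = ∓ i |u_j|^{p-1} u_j`
    (hF : ∀ s ∈ Set.Icc (0 : ℝ) T, ∀ n : ℤ,
      F s n = -Complex.I * ε * ((‖q s n‖ ^ (p - 1) : ℝ) : ℂ) * q s n)
    -- `q` solves the NLS in Duhamel form on `[0,T]`
    (hduh : ∀ t ∈ Set.Icc (0 : ℝ) T,
      q t = (NormedSpace.exp ((-(Complex.I * (t : ℂ))) • H)) (q 0)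
        + ∫ s in (0 : ℝ)..t,
            (NormedSpace.exp ((-(Complex.I * ((t - s : ℝ) : ℂ))) • H)) (F s))
    -- conservation of the `ℓ²` norm
    (hcons : ∀ t ∈ Set.Icc (0 : ℝ) T, ‖q t‖ = ‖q 0‖)
    (δ₀ : ℝ)
    (hl1 : Summable (fun n : ℤ => ‖q 0 n‖))
    (hδ₀ : δ₀ = ∑' n : ℤ, ‖q 0 n‖)
    (hsmall : δ₀ < δstar)
    (hl2 : ‖q 0‖ ≤ δ₀)
    -- bootstrap assumption
    (hboot : ∀ t ∈ Set.Icc (0 : ℝ) T,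
      Real.sqrt (1 + t ^ 2) ^ ζ * (⨆ n : ℤ, ‖q t n‖) ≤ M * δ₀) :
    ∀ t ∈ Set.Icc (0 : ℝ) T,
      Real.sqrt (1 + t ^ 2) ^ ζ * (⨆ n : ℤ, ‖q t n‖) ≤ M / 2 * δ₀ :=
  nls_bootstrap_general H p ζ hp hζ₁ K₁ hK₁ hdisp C₁ hC₁ hconv M δstar hM hδstar T ε hε q F hF hduh
    hcons δ₀ hl1 hδ₀ hsmall hl2 hboot
end

section
/- Let k ≥ 2 be an integer and suppose ψ is real-valued and of class C^k on (a, b), with |ψ^{(k)}(x)| ≥ 1 for all x ∈ (a, b). Then for every λ > 0 one has |∫_a^b e^{i λ ψ(x)} dx| ≤ (5·2^{k−1} − 2) λ^{−1/k}. -/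
/-!
Induction on `k`, carrying a lower bound `μ ≤ |ψ⁽ᵏ⁾|` so that the bound reads
`c_k (λμ) ^ (-1/k)`. For `k = 1` with `ψ'` monotone, write `e^{iλψ} = (iλψ')⁻¹ (e^{iλψ})'` and
integrate by parts: the two boundary terms and the total variation of `1/ψ'` are each at most
`1/(λμ)`, so `c₁ = 3`. For the step, `|ψ⁽ᵏ⁾| ≥ μ` makes `ψ⁽ᵏ⁻¹⁾` monotone with slope at least `μ`,
so `|ψ⁽ᵏ⁻¹⁾| < ρ` only on an interval of length at most `2ρ/μ`; on the two remaining intervals the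
induction hypothesis applies with `μ` replaced by `ρ`. The choice `ρ = μ (λμ) ^ (-1/k)` balances
the two contributions and gives `c_k = 2 c_{k-1} + 2`. Finally `(a, b)` is exhausted by closed
subintervals.
-/

open Set MeasureTheory Filter Topology Complex intervalIntegral

theorem IsPreconnected.forall_le_or_forall_le_neg {α : Type*} [TopologicalSpace α] {s : Set α}
    {g : α → ℝ} {μ : ℝ} (hs : IsPreconnected s) (hg : ContinuousOn g s) (hμ : 0 < μ)
    (hgμ : ∀ x ∈ s, μ ≤ |g x|) : (∀ x ∈ s, μ ≤ g x) ∨ ∀ x ∈ s, g x ≤ -μ := by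
  by_contra! ⟨⟨x, hx, hgx⟩, y, hy, hgy⟩
  have hx' : g x ≤ -μ := (le_abs'.1 (hgμ x hx)).resolve_right hgx.not_ge
  have hy' : μ ≤ g y := (le_abs'.1 (hgμ y hy)).resolve_left hgy.not_ge
  obtain ⟨z, hz, hgz⟩ :=
    hs.intermediate_value hx hy hg (show (0 : ℝ) ∈ Icc (g x) (g y) by constructor <;> linarith)
  have := hgμ z hz
  rw [hgz, abs_zero] at this
  linarith

theorem Convex.mul_sub_le_image_sub_of_le_hasDerivAt {D : Set ℝ} (hD : Convex ℝ D)
    {g g' : ℝ → ℝ} {μ : ℝ} (hg : ∀ x ∈ D, HasDerivAt g (g' x) x) (hμ : ∀ x ∈ D, μ ≤ g' x) :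
    ∀ x ∈ D, ∀ y ∈ D, x ≤ y → μ * (y - x) ≤ g y - g x :=
  hD.mul_sub_le_image_sub_of_le_deriv (fun x hx => (hg x hx).continuousAt.continuousWithinAt)
    (fun x hx => (hg x (interior_subset hx)).differentiableAt.differentiableWithinAt)
    fun x hx => (hg x (interior_subset hx)).deriv ▸ hμ x (interior_subset hx)

theorem intervalIntegral.integral_abs_eq_abs_sub_of_hasDerivAt {h h' : ℝ → ℝ} {c d : ℝ}
    (hcd : c ≤ d) (hh : ∀ x ∈ Icc c d, HasDerivAt h (h' x) x)
    (hh' : IntervalIntegrable h' volume c d)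
    (hsign : (∀ x ∈ Icc c d, 0 ≤ h' x) ∨ ∀ x ∈ Icc c d, h' x ≤ 0) :
    ∫ x in c..d, |h' x| = |h d - h c| := by
  have hftc := integral_eq_sub_of_hasDerivAt (by rwa [uIcc_of_le hcd]) hh'
  rcases hsign with hpos | hneg
  · have hnonneg : 0 ≤ ∫ x in c..d, h' x := integral_nonneg hcd hpos
    rw [integral_congr fun x hx => abs_of_nonneg (hpos x ((uIcc_of_le hcd) ▸ hx)), hftc,
      abs_of_nonneg (hftc ▸ hnonneg)]
  · have hnonneg : 0 ≤ ∫ x in c..d, -h' x :=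
      integral_nonneg hcd fun x hx => neg_nonneg.2 (hneg x hx)
    rw [integral_neg, hftc] at hnonneg
    rw [integral_congr fun x hx => abs_of_nonpos (hneg x ((uIcc_of_le hcd) ▸ hx)), integral_neg,
      hftc, abs_of_nonpos (neg_nonneg.1 hnonneg)]

theorem abs_inv_sub_inv_le_inv_of_le {x y μ : ℝ} (hμ : 0 < μ) (hx : μ ≤ x) (hy : μ ≤ y) :
    |x⁻¹ - y⁻¹| ≤ μ⁻¹ :=
  abs_sub_le_of_nonneg_of_le (inv_nonneg.2 (hμ.le.trans hx)) (inv_anti₀ hμ hx)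
    (inv_nonneg.2 (hμ.le.trans hy)) (inv_anti₀ hμ hy)

theorem norm_cexp_I_mul_ofReal_mul_ofReal (a b : ℝ) : ‖cexp (I * a * b)‖ = 1 := by
  rw [mul_assoc, ← ofReal_mul, norm_exp_I_mul_ofReal]

theorem norm_integral_cexp_le_of_mul_deriv_eq_one {φ φ' h h' : ℝ → ℝ} {c d lam : ℝ}
    (hcd : c ≤ d) (hlam : 0 < lam) (hφ : ∀ x ∈ Icc c d, HasDerivAt φ (φ' x) x)
    (hφ'c : ContinuousOn φ' (Icc c d)) (hh : ∀ x ∈ Icc c d, HasDerivAt h (h' x) x)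
    (hh'c : ContinuousOn h' (Icc c d)) (hhφ' : ∀ x ∈ Icc c d, h x * φ' x = 1) :
    ‖∫ x in c..d, cexp (I * lam * φ x)‖ ≤ (|h d| + |h c| + ∫ x in c..d, |h' x|) / lam := by
  rw [← uIcc_of_le hcd] at hφ hφ'c hh hh'c hhφ'
  -- integrate by parts with `u = h / (iλ)` and `v = e^{iλφ}`, so that `u v' = v`
  set u : ℝ → ℂ := fun x => h x * (-I / lam)
  set v : ℝ → ℂ := fun x => cexp (I * lam * φ x)
  have hu : ∀ x ∈ uIcc c d, HasDerivAt u (h' x * (-I / lam)) x := fun x hx =>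
    (hh x hx).ofReal_comp.mul_const _
  have hv : ∀ x ∈ uIcc c d, HasDerivAt v (v x * (I * lam * φ' x)) x := fun x hx =>
    ((hφ x hx).ofReal_comp.const_mul (I * lam)).cexp
  have huv : ∀ x ∈ uIcc c d, u x * (v x * (I * lam * φ' x)) = v x := fun x hx => by
    have hlam' : (lam : ℂ) ≠ 0 := ofReal_ne_zero.2 hlam.ne'
    calc u x * (v x * (I * lam * φ' x)) = -(I * I) * ((h x * φ' x : ℝ) : ℂ) * v x := by
          simp only [u]; push_cast; field_simp
      _ = v x := by rw [hhφ' x hx, I_mul_I, neg_neg, ofReal_one, one_mul, one_mul]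
  have hv1 : ∀ x, ‖v x‖ = 1 := fun x => norm_cexp_I_mul_ofReal_mul_ofReal lam (φ x)
  have hvc : ContinuousOn v (uIcc c d) := HasDerivAt.continuousOn hv
  have hparts := integral_mul_deriv_eq_deriv_mul hu hv
    (ContinuousOn.intervalIntegrable (by fun_prop)) (ContinuousOn.intervalIntegrable (by fun_prop))
  have hnorm : ∀ (k : ℝ → ℝ) x, ‖(k x : ℂ) * (-I / lam) * v x‖ = |k x| / lam := fun k x => by
    simp [hv1, abs_of_pos hlam, div_eq_mul_inv]
  rw [← integral_congr huv, hparts]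
  calc _ ≤ ‖u d * v d‖ + ‖u c * v c‖ + ‖∫ x in c..d, (h' x : ℂ) * (-I / lam) * v x‖ :=
        (norm_sub_le _ _).trans (by gcongr; exact norm_sub_le _ _)
    _ ≤ |h d| / lam + |h c| / lam + (∫ x in c..d, |h' x|) / lam := by
        rw [hnorm h, hnorm h, ← intervalIntegral.integral_div]
        grw [intervalIntegral.norm_integral_le_integral_norm hcd]
        simp only [hnorm h', le_rfl]
    _ = (|h d| + |h c| + ∫ x in c..d, |h' x|) / lam := by ring

theorem norm_integral_cexp_le_of_abs_deriv_ge {φ φ' φ'' : ℝ → ℝ} {c d μ lam : ℝ} (hcd : c ≤ d)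
    (hμ : 0 < μ) (hlam : 0 < lam) (hφ : ∀ x ∈ Icc c d, HasDerivAt φ (φ' x) x)
    (hφ' : ∀ x ∈ Icc c d, HasDerivAt φ' (φ'' x) x) (hφ''c : ContinuousOn φ'' (Icc c d))
    (hsign : (∀ x ∈ Icc c d, 0 ≤ φ'' x) ∨ ∀ x ∈ Icc c d, φ'' x ≤ 0)
    (hμφ' : ∀ x ∈ Icc c d, μ ≤ |φ' x|) :
    ‖∫ x in c..d, cexp (I * lam * φ x)‖ ≤ 3 / (lam * μ) := by
  have hφ'c : ContinuousOn φ' (Icc c d) := HasDerivAt.continuousOn hφ'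
  have hne : ∀ x ∈ Icc c d, φ' x ≠ 0 := fun x hx h0 => by
    have := hμφ' x hx
    rw [h0, abs_zero] at this
    linarith
  have hinv : ∀ x ∈ Icc c d, |(φ' x)⁻¹| ≤ μ⁻¹ := fun x hx => by
    rw [abs_inv]
    exact inv_anti₀ hμ (hμφ' x hx)
  have hvariation : |(φ' d)⁻¹ - (φ' c)⁻¹| ≤ μ⁻¹ := by
    have hd := right_mem_Icc.2 hcd
    have hc := left_mem_Icc.2 hcd
    rcases isPreconnected_Icc.forall_le_or_forall_le_neg hφ'c hμ hμφ' with h | h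
    · exact abs_inv_sub_inv_le_inv_of_le hμ (h d hd) (h c hc)
    · simpa [abs_sub_comm, neg_add_eq_sub] using
        abs_inv_sub_inv_le_inv_of_le hμ (le_neg.1 (h d hd)) (le_neg.1 (h c hc))
  set h' : ℝ → ℝ := fun x => -φ'' x / φ' x ^ 2
  have hh : ∀ x ∈ Icc c d, HasDerivAt (fun x => (φ' x)⁻¹) (h' x) x :=
    fun x hx => (hφ' x hx).inv (hne x hx)
  have hh'c : ContinuousOn h' (Icc c d) :=
    hφ''c.neg.div (hφ'c.pow 2) fun x hx => pow_ne_zero 2 (hne x hx)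
  have hh'sign : (∀ x ∈ Icc c d, 0 ≤ h' x) ∨ ∀ x ∈ Icc c d, h' x ≤ 0 := by
    rcases hsign with h | h
    · exact Or.inr fun x hx =>
        div_nonpos_of_nonpos_of_nonneg (neg_nonpos.2 (h x hx)) (sq_nonneg _)
    · exact Or.inl fun x hx => div_nonneg (neg_nonneg.2 (h x hx)) (sq_nonneg _)
  calc ‖∫ x in c..d, cexp (I * lam * φ x)‖
      ≤ (|(φ' d)⁻¹| + |(φ' c)⁻¹| + ∫ x in c..d, |h' x|) / lam :=
        norm_integral_cexp_le_of_mul_deriv_eq_one hcd hlam hφ hφ'c hh hh'c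
          fun x hx => inv_mul_cancel₀ (hne x hx)
    _ = (|(φ' d)⁻¹| + |(φ' c)⁻¹| + |(φ' d)⁻¹ - (φ' c)⁻¹|) / lam := by
        rw [integral_abs_eq_abs_sub_of_hasDerivAt hcd hh (hh'c.intervalIntegrable_of_Icc hcd)
          hh'sign]
    _ ≤ (μ⁻¹ + μ⁻¹ + μ⁻¹) / lam := by
        gcongr
        exacts [hinv d (right_mem_Icc.2 hcd), hinv c (left_mem_Icc.2 hcd)]
    _ = 3 / (lam * μ) := by field_simp; ring

theorem exists_mem_Icc_le_and_ge {g : ℝ → ℝ} {c d : ℝ} (hcd : c ≤ d)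
    (hg : ContinuousOn g (Icc c d)) (s : ℝ) :
    ∃ p ∈ Icc c d, (p = c ∨ g p ≤ s) ∧ (p = d ∨ s ≤ g p) := by
  by_cases hc : s ≤ g c
  · exact ⟨c, left_mem_Icc.2 hcd, Or.inl rfl, Or.inr hc⟩
  by_cases hd : g d ≤ s
  · exact ⟨d, right_mem_Icc.2 hcd, Or.inr hd, Or.inl rfl⟩
  obtain ⟨p, hp, hgp⟩ := intermediate_value_Icc hcd hg ⟨(not_le.1 hc).le, (not_le.1 hd).le⟩
  exact ⟨p, hp, Or.inr hgp.le, Or.inr hgp.ge⟩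

theorem norm_integral_le_of_bound_where_abs_ge {E : Type*} [NormedAddCommGroup E]
    [NormedSpace ℝ E] {F : ℝ → E} {g : ℝ → ℝ} {c d μ ρ B : ℝ} (hcd : c ≤ d) (hμ : 0 < μ)
    (hρ : 0 < ρ) (hB : 0 ≤ B) (hF : IntegrableOn F (Icc c d)) (hF1 : ∀ x ∈ Icc c d, ‖F x‖ ≤ 1)
    (hg : ContinuousOn g (Icc c d))
    (hgrow : ∀ x ∈ Icc c d, ∀ y ∈ Icc c d, x ≤ y → μ * (y - x) ≤ g y - g x)
    (hsub : ∀ u v, c ≤ u → u ≤ v → v ≤ d → (∀ x ∈ Icc u v, ρ ≤ |g x|) →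
      ‖∫ x in u..v, F x‖ ≤ B) :
    ‖∫ x in c..d, F x‖ ≤ 2 * B + 2 * ρ / μ := by
  have hmono : ∀ x ∈ Icc c d, ∀ y ∈ Icc c d, x ≤ y → g x ≤ g y := fun x hx y hy hxy => by
    nlinarith [hgrow x hx y hy hxy]
  obtain ⟨p, hp, hpc, hpd⟩ := exists_mem_Icc_le_and_ge hcd hg (-ρ)
  obtain ⟨q, hq, hqc, hqd⟩ := exists_mem_Icc_le_and_ge hcd hg ρ
  -- `c ≤ p ≤ q ≤ d`, `g ≤ -ρ` on `[c, p]` and `ρ ≤ g` on `[q, d]` unless these are points,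
  -- and `q - p ≤ 2ρ/μ`
  have hpq : p ≤ q := by
    by_contra! hqp
    have hgq := hqd.resolve_left (hqp.trans_le hp.2).ne
    have hgp := hpc.resolve_left (hq.1.trans_lt hqp).ne'
    linarith [hmono q hq p hp hqp.le]
  have hint : ∀ u v, c ≤ u → u ≤ v → v ≤ d → IntervalIntegrable F volume u v :=
    fun u v hu huv hv => (hF.mono_set (uIcc_of_le huv ▸ Icc_subset_Icc hu hv)).intervalIntegrable
  have hleft : ‖∫ x in c..p, F x‖ ≤ B := by
    rcases hpc with rfl | hgp
    · simpa using hB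
    refine hsub c p le_rfl hp.1 hp.2 fun x hx => le_abs'.2 (Or.inl ?_)
    linarith [hmono x ⟨hx.1, hx.2.trans hp.2⟩ p hp hx.2]
  have hright : ‖∫ x in q..d, F x‖ ≤ B := by
    rcases hqd with rfl | hgq
    · simpa using hB
    refine hsub q d hq.1 hq.2 le_rfl fun x hx => le_abs'.2 (Or.inr ?_)
    linarith [hmono q hq x ⟨hq.1.trans hx.1, hx.2⟩ hx.1]
  have hmid : ‖∫ x in p..q, F x‖ ≤ 2 * ρ / μ := by
    calc ‖∫ x in p..q, F x‖ ≤ 1 * |q - p| := norm_integral_le_of_norm_le_const fun x hx =>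
          hF1 x (Icc_subset_Icc hp.1 hq.2 (uIcc_of_le hpq ▸ uIoc_subset_uIcc hx))
      _ ≤ 2 * ρ / μ := by
        rw [one_mul, abs_of_nonneg (sub_nonneg.2 hpq), le_div_iff₀ hμ]
        rcases hpd with rfl | hgp
        · rw [le_antisymm hq.2 hpq, sub_self, zero_mul]; positivity
        rcases hqc with rfl | hgq
        · rw [le_antisymm hpq hp.1, sub_self, zero_mul]; positivity
        linarith [hgrow p hp q hq hpq]
  rw [← integral_add_adjacent_intervals (hint c p le_rfl hp.1 hp.2) (hint p d hp.1 hp.2 le_rfl),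
    ← integral_add_adjacent_intervals (hint p q hp.1 hpq hq.2) (hint q d hq.1 hq.2 le_rfl)]
  calc _ ≤ ‖∫ x in c..p, F x‖ + (‖∫ x in p..q, F x‖ + ‖∫ x in q..d, F x‖) :=
        (norm_add_le _ _).trans (by gcongr; exact norm_add_le _ _)
    _ ≤ 2 * B + 2 * ρ / μ := by linarith

theorem norm_integral_le_rpow_of_bound_where_abs_ge {E : Type*} [NormedAddCommGroup E]
    [NormedSpace ℝ E] {F : ℝ → E} {g g' : ℝ → ℝ} {c d μ lam r R : ℝ} (hcd : c ≤ d) (hμ : 0 < μ)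
    (hlam : 0 < lam) (hr : 0 < r) (hR : 0 ≤ R) (hF : IntegrableOn F (Icc c d))
    (hF1 : ∀ x ∈ Icc c d, ‖F x‖ ≤ 1)
    (hg : ∀ x ∈ Icc c d, HasDerivAt g (g' x) x) (hg'c : ContinuousOn g' (Icc c d))
    (hμg' : ∀ x ∈ Icc c d, μ ≤ |g' x|)
    (hsub : ∀ u v ρ, c ≤ u → u ≤ v → v ≤ d → 0 < ρ → (∀ x ∈ Icc u v, ρ ≤ |g x|) →
      ‖∫ x in u..v, F x‖ ≤ R * (lam * ρ) ^ (-(1 / r))) :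
    ‖∫ x in c..d, F x‖ ≤ (2 * R + 2) * (lam * μ) ^ (-(1 / (r + 1))) := by
  set t := (lam * μ) ^ (-(1 / (r + 1)))
  have ht : 0 < t := by positivity
  -- the threshold `μ t` balances the two bounds: `(λ μ t) ^ (-1/r) = t`
  have hscale : (lam * (μ * t)) ^ (-(1 / r)) = t := by
    have hlμ : 0 < lam * μ := by positivity
    rw [← mul_assoc, mul_comm, ← Real.rpow_add_one hlμ.ne', ← Real.rpow_mul hlμ.le]
    congr 1
    field_simp
    ring
  have hgc : ContinuousOn g (Icc c d) := HasDerivAt.continuousOn hg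
  obtain ⟨G, hGc, hGgrow, hGabs⟩ : ∃ G : ℝ → ℝ, ContinuousOn G (Icc c d) ∧
      (∀ x ∈ Icc c d, ∀ y ∈ Icc c d, x ≤ y → μ * (y - x) ≤ G y - G x) ∧ ∀ x, |G x| = |g x| := by
    rcases isPreconnected_Icc.forall_le_or_forall_le_neg hg'c hμ hμg' with hpos | hneg
    · exact ⟨g, hgc, (convex_Icc c d).mul_sub_le_image_sub_of_le_hasDerivAt hg hpos,
        fun _ => rfl⟩
    · exact ⟨-g, hgc.neg, (convex_Icc c d).mul_sub_le_image_sub_of_le_hasDerivAt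
        (fun x hx => (hg x hx).neg) (fun x hx => le_neg.1 (hneg x hx)), fun x => abs_neg (g x)⟩
  calc ‖∫ x in c..d, F x‖ ≤ 2 * (R * t) + 2 * (μ * t) / μ :=
        norm_integral_le_of_bound_where_abs_ge hcd hμ (by positivity) (by positivity)
          hF hF1 hGc hGgrow fun u v hu huv hv hGuv => hscale ▸ hsub u v (μ * t) hu huv hv
            (by positivity) fun x hx => hGabs x ▸ hGuv x hx
    _ = (2 * R + 2) * t := by field_simp

theorem norm_integral_cexp_le_of_abs_iteratedDeriv_ge {n : ℕ} (hn : 2 ≤ n) {f : ℕ → ℝ → ℝ}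
    {c d μ lam : ℝ} (hcd : c ≤ d) (hμ : 0 < μ) (hlam : 0 < lam)
    (hf : ∀ j < n, ∀ x ∈ Icc c d, HasDerivAt (f j) (f (j + 1) x) x)
    (hfn : ContinuousOn (f n) (Icc c d)) (hμf : ∀ x ∈ Icc c d, μ ≤ |f n x|) :
    ‖∫ x in c..d, cexp (I * lam * f 0 x)‖ ≤
      (5 * 2 ^ (n - 1) - 2) * (lam * μ) ^ (-(1 / (n : ℝ))) := by
  have hF : IntegrableOn (fun x => cexp (I * lam * f 0 x)) (Icc c d) := by
    have := HasDerivAt.continuousOn (hf 0 (by omega))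
    exact ContinuousOn.integrableOn_Icc (by fun_prop)
  have hF1 : ∀ x ∈ Icc c d, ‖cexp (I * lam * f 0 x)‖ ≤ 1 :=
    fun x _ => (norm_cexp_I_mul_ofReal_mul_ofReal lam (f 0 x)).le
  induction n, hn using Nat.le_induction generalizing c d μ with
  | base =>
    have hsign := isPreconnected_Icc.forall_le_or_forall_le_neg hfn hμ hμf
    have := norm_integral_le_rpow_of_bound_where_abs_ge (r := 1) (R := 3) hcd hμ hlam one_pos
      (by norm_num) hF hF1 (hf 1 (by norm_num)) hfn hμf fun u v ρ hu huv hv hρ hρf => by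
        have hsub : Icc u v ⊆ Icc c d := Icc_subset_Icc hu hv
        rw [div_one, Real.rpow_neg_one, ← div_eq_mul_inv]
        exact norm_integral_cexp_le_of_abs_deriv_ge huv hρ hlam
          (fun x hx => hf 0 (by norm_num) x (hsub hx))
          (fun x hx => hf 1 (by norm_num) x (hsub hx))
          (hfn.mono hsub) (hsign.imp (fun h x hx => hμ.le.trans (h x (hsub hx)))
            fun h x hx => (h x (hsub hx)).trans (neg_nonpos.2 hμ.le)) hρf
    convert this using 2 <;> norm_num
  | succ n hn ih =>
    obtain ⟨m, rfl⟩ : ∃ m, n = m + 1 := ⟨n - 1, by omega⟩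
    have := norm_integral_le_rpow_of_bound_where_abs_ge (r := (m + 1 : ℕ)) (R := 5 * 2 ^ m - 2)
      hcd hμ hlam (by positivity) (by have := one_le_pow₀ (M₀ := ℝ) (n := m) one_le_two; linarith)
      hF hF1 (hf (m + 1) (by omega)) hfn hμf fun u v ρ hu huv hv hρ hρf => by
        have hsub : Icc u v ⊆ Icc c d := Icc_subset_Icc hu hv
        simpa using ih huv hρ (fun j hj x hx => hf j (by omega) x (hsub hx))
          (HasDerivAt.continuousOn fun x hx => hf (m + 1) (by omega) x (hsub hx)) hρf
          (hF.mono_set hsub) fun x hx => hF1 x (hsub hx)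
    convert this using 2
    · simp [pow_succ]; ring
    · push_cast; ring

theorem ContDiffOn.hasDerivAt_iteratedDerivWithin {ψ : ℝ → ℝ} {s : Set ℝ} {n : WithTop ℕ∞}
    {j : ℕ} {x : ℝ} (hψ : ContDiffOn ℝ n ψ s) (hs : IsOpen s) (hj : j < n) (hx : x ∈ s) :
    HasDerivAt (iteratedDerivWithin j ψ s) (iteratedDerivWithin (j + 1) ψ s x) x := by
  rw [iteratedDerivWithin_succ]
  exact (hψ.differentiableOn_iteratedDerivWithin hj hs.uniqueDiffOn x hx).hasDerivWithinAt
    |>.hasDerivAt (hs.mem_nhds hx)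

theorem norm_setIntegral_Ioo_le_of_forall_norm_intervalIntegral_le {E : Type*}
    [NormedAddCommGroup E] [NormedSpace ℝ E] {F : ℝ → E} {a b C : ℝ} (hab : a < b)
    (h : ∀ c d, a < c → c ≤ d → d < b → ‖∫ x in c..d, F x‖ ≤ C) :
    ‖∫ x in Ioo a b, F x‖ ≤ C := by
  by_cases hF : IntegrableOn F (Ioo a b)
  swap
  · rw [integral_undef hF, norm_zero]
    simpa using h ((a + b) / 2) ((a + b) / 2) (by linarith) le_rfl (by linarith)
  have hcover : AECover (volume.restrict (Ioo a b)) (𝓝[>] 0) fun ε => Ioc (a + ε) (b - ε) :=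
    aecover_Ioo_of_Ioc
      ((Continuous.tendsto' (by fun_prop) 0 a (add_zero a)).mono_left nhdsWithin_le_nhds)
      ((Continuous.tendsto' (by fun_prop) 0 b (sub_zero b)).mono_left nhdsWithin_le_nhds)
  refine le_of_tendsto (hcover.integral_tendsto_of_countably_generated hF).norm ?_
  filter_upwards [Ioo_mem_nhdsGT (show (0 : ℝ) < (b - a) / 2 by linarith)] with ε hε
  rw [Measure.restrict_restrict measurableSet_Ioc,
    inter_eq_left.2 ((Ioc_subset_Ioo_right (by linarith [hε.1])).trans
      (Ioo_subset_Ioo (by linarith [hε.1]) le_rfl)),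
    ← integral_of_le (by linarith [hε.2])]
  exact h _ _ (by linarith [hε.1]) (by linarith [hε.2]) (by linarith [hε.1])

/-- Van der Corput lemma: if `ψ` is real-valued, `C^k` on `(a,b)` with `k ≥ 2` and
`|ψ^{(k)}| ≥ 1` on `(a,b)`, then for every `λ > 0`,
`|∫_a^b e^{iλψ(x)} dx| ≤ (5·2^{k-1} - 2) λ^{-1/k}`. -/
theorem van_der_corput (k : ℕ) (hk : 2 ≤ k) (a b : ℝ) (hab : a < b) (ψ : ℝ → ℝ)
    (hψ : ContDiffOn ℝ k ψ (Set.Ioo a b))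
    (hder : ∀ x ∈ Set.Ioo a b, 1 ≤ |iteratedDerivWithin k ψ (Set.Ioo a b) x|)
    (lam : ℝ) (hlam : 0 < lam) :
    ‖∫ x in Set.Ioo a b, Complex.exp (Complex.I * lam * ψ x)‖
      ≤ (5 * 2 ^ (k - 1) - 2 : ℝ) * lam ^ (-(1 / (k : ℝ))) := by
  refine norm_setIntegral_Ioo_le_of_forall_norm_intervalIntegral_le hab fun c d hac hcd hdb => ?_
  have hsub : Icc c d ⊆ Ioo a b := Icc_subset_Ioo hac hdb
  simpa using norm_integral_cexp_le_of_abs_iteratedDeriv_ge hk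
    (f := fun j => iteratedDerivWithin j ψ (Ioo a b)) hcd one_pos hlam
    (fun j hj x hx =>
      hψ.hasDerivAt_iteratedDerivWithin isOpen_Ioo (by exact_mod_cast hj) (hsub hx))
    ((hψ.continuousOn_iteratedDerivWithin le_rfl isOpen_Ioo.uniqueDiffOn).mono hsub)
    fun x hx => hder x (hsub hx)
end

section
/- Let k ≥ 2 be an integer, c > 0, and suppose ψ is real-valued and of class C^k on (a, b), with |ψ^{(k)}(x)| ≥ c for all x ∈ (a, b). Then for every real λ ≠ 0 one has |∫_a^b e^{i λ ψ(x)} dx| ≤ (5·2^{k−1} − 2) c^{−1/k} |λ|^{−1/k}. -/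
/-!
Van der Corput's argument. For `k = 1` with `ψ'` monotone, write
`e^{iλψ} = (e^{iλψ})' / (iλψ')` and integrate by parts: each boundary term is at most
`1 / (c|λ|)`, and so is the remainder, which is controlled by the total variation of `1 / ψ'`.
For the step `k → k + 1`, `ψ^{(k)}` is strictly monotone at rate `c`, so `|ψ^{(k)}| < δ` only on
an interval of length at most `2δ / c`. There the integrand is bounded trivially; on the at most
two remaining intervals the `k`-th case applies with `c` replaced by `δ`. The choice
`δ = c (c|λ|)^{-1/(k+1)}` balances both contributions and turns the constant `C_k` into
`C_{k+1} = 2 C_k + 2`, whence `C_k = 5·2^{k-1} - 2` from `C_1 = 3`. Finally the open interval is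
exhausted by compact ones.
-/

open MeasureTheory Set Filter Topology Complex

lemma norm_cexp_I_mul_ofReal_mul (l t : ℝ) : ‖cexp (I * l * t)‖ = 1 := by
  simpa [mul_assoc] using norm_exp_I_mul_ofReal (l * t)

lemma IsPreconnected.forall_le_or_forall_le_neg_of_le_abs {s : Set ℝ} {g : ℝ → ℝ} {c : ℝ}
    (hs : IsPreconnected s) (hg : ContinuousOn g s) (hc : 0 < c) (h : ∀ x ∈ s, c ≤ |g x|) :
    (∀ x ∈ s, c ≤ g x) ∨ ∀ x ∈ s, g x ≤ -c := by
  by_contra! hne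
  obtain ⟨⟨x, hx, hgx⟩, ⟨y, hy, hgy⟩⟩ := hne
  have hx' : g x ≤ -c := by cases abs_cases (g x) <;> linarith [h x hx]
  have hy' : c ≤ g y := by cases abs_cases (g y) <;> linarith [h y hy]
  obtain ⟨z, hz, hgz⟩ :=
    hs.intermediate_value hx hy hg (show (0 : ℝ) ∈ Icc (g x) (g y) from ⟨by linarith, by linarith⟩)
  have := h z hz
  rw [hgz, abs_zero] at this
  linarith

lemma inv_sub_inv_le_of_le_abs {x y c : ℝ} (hc : 0 < c) (hx : c ≤ |x|) (hy : c ≤ |y|)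
    (hxy : x ≤ y) : x⁻¹ - y⁻¹ ≤ c⁻¹ := by
  have hy' : -y⁻¹ ≤ c⁻¹ := (neg_le_abs _).trans (by rw [abs_inv]; exact inv_anti₀ hc hy)
  rcases (abs_pos.mp (hc.trans_le hx)).lt_or_gt with hx0 | hx0
  · linarith [inv_lt_zero.2 hx0]
  · rw [abs_of_pos hx0] at hx
    linarith [inv_anti₀ hc hx, inv_pos.2 (hx0.trans_le hxy)]

lemma rpow_neg_one_div_add_one_mul_self_rpow {x n : ℝ} (hx : 0 < x) (hn : 0 < n) :
    (x ^ (-(1 / (n + 1))) * x) ^ (-(1 / n)) = x ^ (-(1 / (n + 1))) := by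
  rw [← Real.rpow_add_one hx.ne', ← Real.rpow_mul hx.le]
  congr 1
  field_simp
  ring

lemma hasDerivAt_iteratedDerivWithin {n : WithTop ℕ∞} {m : ℕ} {φ : ℝ → ℝ} {U : Set ℝ} {x : ℝ}
    (hU : IsOpen U) (hφ : ContDiffOn ℝ n φ U) (hm : (m : WithTop ℕ∞) < n) (hx : x ∈ U) :
    HasDerivAt (iteratedDerivWithin m φ U) (iteratedDerivWithin (m + 1) φ U x) x := by
  rw [iteratedDerivWithin_succ, derivWithin_of_isOpen hU hx]
  exact (((hφ.differentiableOn_iteratedDerivWithin hm hU.uniqueDiffOn) x hx).differentiableAt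
    (hU.mem_nhds hx)).hasDerivAt

lemma mul_sub_le_sub_of_hasDerivAt {g g' : ℝ → ℝ} {A B c : ℝ}
    (hg : ∀ x ∈ Icc A B, HasDerivAt g (g' x) x) (hc : ∀ x ∈ Icc A B, c ≤ g' x) :
    ∀ x ∈ Icc A B, ∀ y ∈ Icc A B, x ≤ y → c * (y - x) ≤ g y - g x :=
  (convex_Icc A B).mul_sub_le_image_sub_of_le_deriv (HasDerivAt.continuousOn hg)
    (fun x hx => (hg x (interior_subset hx)).differentiableAt.differentiableWithinAt)
    fun x hx => (hg x (interior_subset hx)).deriv ▸ hc x (interior_subset hx)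

section Splitting

variable {E : Type*} [NormedAddCommGroup E] [NormedSpace ℝ E] {f : ℝ → E}

lemma norm_integral_le_sub_of_norm_le_one {u v : ℝ} (huv : u ≤ v)
    (hf : ∀ x ∈ Icc u v, ‖f x‖ ≤ 1) : ‖∫ x in u..v, f x‖ ≤ v - u := by
  have := intervalIntegral.norm_integral_le_of_norm_le_const (C := 1) (a := u) (b := v)
    fun x hx => hf x (by rw [uIoc_of_le huv] at hx; exact Ioc_subset_Icc_self hx)
  rwa [one_mul, abs_of_nonneg (sub_nonneg.2 huv)] at this

variable {g : ℝ → ℝ} {A B c δ K : ℝ}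

lemma norm_integral_le_add_of_nonneg_left (hAB : A ≤ B) (hfi : ContinuousOn f (Icc A B))
    (hf : ∀ x ∈ Icc A B, ‖f x‖ ≤ 1) (hc : 0 < c)
    (hgc : ∀ x ∈ Icc A B, ∀ y ∈ Icc A B, x ≤ y → c * (y - x) ≤ g y - g x)
    (hδ : 0 ≤ δ) (hK0 : 0 ≤ K)
    (hK : ∀ A' B', A ≤ A' → A' ≤ B' → B' ≤ B → (∀ x ∈ Icc A' B', δ ≤ |g x|) →
      ‖∫ x in A'..B', f x‖ ≤ K) (hgA : 0 ≤ g A) :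
    ‖∫ x in A..B, f x‖ ≤ K + δ / c := by
  have hw : A ≤ A + δ / c := le_add_of_nonneg_right (div_nonneg hδ hc.le)
  rcases le_total B (A + δ / c) with hshort | hlong
  · linarith [norm_integral_le_sub_of_norm_le_one hAB hf]
  have hfar : ‖∫ x in A + δ / c..B, f x‖ ≤ K := hK _ _ hw hlong le_rfl fun x hx => by
    have hgx := hgc A ⟨le_rfl, hAB⟩ x ⟨hw.trans hx.1, hx.2⟩ (hw.trans hx.1)
    have hcx := mul_le_mul_of_nonneg_left (sub_le_sub_right hx.1 A) hc.le
    rw [add_sub_cancel_left, mul_div_cancel₀ _ hc.ne'] at hcx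
    exact le_abs.2 (Or.inl (by linarith))
  have hnear := norm_integral_le_sub_of_norm_le_one hw fun x hx => hf x ⟨hx.1, hx.2.trans hlong⟩
  rw [← intervalIntegral.integral_add_adjacent_intervals
    ((hfi.mono (Icc_subset_Icc le_rfl hlong)).intervalIntegrable_of_Icc hw)
    ((hfi.mono (Icc_subset_Icc hw le_rfl)).intervalIntegrable_of_Icc hlong)]
  linarith [norm_add_le (∫ x in A..A + δ / c, f x) (∫ x in A + δ / c..B, f x)]

lemma norm_integral_le_add_of_nonpos_right (hAB : A ≤ B) (hfi : ContinuousOn f (Icc A B))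
    (hf : ∀ x ∈ Icc A B, ‖f x‖ ≤ 1) (hc : 0 < c)
    (hgc : ∀ x ∈ Icc A B, ∀ y ∈ Icc A B, x ≤ y → c * (y - x) ≤ g y - g x)
    (hδ : 0 ≤ δ) (hK0 : 0 ≤ K)
    (hK : ∀ A' B', A ≤ A' → A' ≤ B' → B' ≤ B → (∀ x ∈ Icc A' B', δ ≤ |g x|) →
      ‖∫ x in A'..B', f x‖ ≤ K) (hgB : g B ≤ 0) :
    ‖∫ x in A..B, f x‖ ≤ K + δ / c := by
  have hmem : ∀ {x}, x ∈ Icc (-B) (-A) → -x ∈ Icc A B := fun hx =>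
    ⟨by linarith [hx.2], by linarith [hx.1]⟩
  have := norm_integral_le_add_of_nonneg_left (f := fun x => f (-x)) (g := fun x => -g (-x))
    (neg_le_neg hAB) (hfi.comp continuousOn_neg fun x hx => hmem hx) (fun x hx => hf _ (hmem hx)) hc
    (fun x hx y hy hxy => by linarith [hgc (-y) (hmem hy) (-x) (hmem hx) (neg_le_neg hxy)])
    hδ hK0 (fun A' B' hA' hA'B' hB' h => by
      rw [intervalIntegral.integral_comp_neg]
      refine hK _ _ (by linarith) (neg_le_neg hA'B') (by linarith) fun x hx => ?_
      simpa using h (-x) ⟨by linarith [hx.2], by linarith [hx.1]⟩) (by simpa using hgB)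
  rwa [intervalIntegral.integral_comp_neg, neg_neg, neg_neg] at this

lemma norm_integral_le_of_forall_le_abs_subinterval (hAB : A ≤ B) (hfi : ContinuousOn f (Icc A B))
    (hf : ∀ x ∈ Icc A B, ‖f x‖ ≤ 1) (hg : ContinuousOn g (Icc A B)) (hc : 0 < c)
    (hgc : ∀ x ∈ Icc A B, ∀ y ∈ Icc A B, x ≤ y → c * (y - x) ≤ g y - g x)
    (hδ : 0 ≤ δ) (hK0 : 0 ≤ K)
    (hK : ∀ A' B', A ≤ A' → A' ≤ B' → B' ≤ B → (∀ x ∈ Icc A' B', δ ≤ |g x|) →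
      ‖∫ x in A'..B', f x‖ ≤ K) :
    ‖∫ x in A..B, f x‖ ≤ 2 * K + 2 * (δ / c) := by
  have hleft : ∀ v ∈ Icc A B, g v ≤ 0 → ‖∫ x in A..v, f x‖ ≤ K + δ / c := fun v hv hgv =>
    norm_integral_le_add_of_nonpos_right hv.1 (hfi.mono (Icc_subset_Icc_right hv.2))
      (fun x hx => hf x ⟨hx.1, hx.2.trans hv.2⟩) hc
      (fun x hx y hy => hgc x ⟨hx.1, hx.2.trans hv.2⟩ y ⟨hy.1, hy.2.trans hv.2⟩) hδ hK0
      (fun A' B' hA' hA'B' hB' => hK A' B' hA' hA'B' (hB'.trans hv.2)) hgv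
  have hright : ∀ u ∈ Icc A B, 0 ≤ g u → ‖∫ x in u..B, f x‖ ≤ K + δ / c := fun u hu hgu =>
    norm_integral_le_add_of_nonneg_left hu.2 (hfi.mono (Icc_subset_Icc_left hu.1))
      (fun x hx => hf x ⟨hu.1.trans hx.1, hx.2⟩) hc
      (fun x hx y hy => hgc x ⟨hu.1.trans hx.1, hx.2⟩ y ⟨hu.1.trans hy.1, hy.2⟩) hδ hK0
      (fun A' B' hA' hA'B' hB' => hK A' B' (hu.1.trans hA') hA'B' hB') hgu
  have hbound : 0 ≤ K + δ / c := add_nonneg hK0 (div_nonneg hδ hc.le)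
  obtain ⟨x₀, hx₀, hA₀, hB₀⟩ : ∃ x₀ ∈ Icc A B,
      ‖∫ x in A..x₀, f x‖ ≤ K + δ / c ∧ ‖∫ x in x₀..B, f x‖ ≤ K + δ / c := by
    by_cases hA : 0 ≤ g A
    · exact ⟨A, ⟨le_rfl, hAB⟩, by simpa using hbound, hright A ⟨le_rfl, hAB⟩ hA⟩
    by_cases hB : g B ≤ 0
    · exact ⟨B, ⟨hAB, le_rfl⟩, hleft B ⟨hAB, le_rfl⟩ hB, by simpa using hbound⟩
    rw [not_le] at hA hB
    obtain ⟨x₀, hx₀, hg₀⟩ := intermediate_value_Icc hAB hg ⟨hA.le, hB.le⟩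
    exact ⟨x₀, hx₀, hleft x₀ hx₀ hg₀.le, hright x₀ hx₀ hg₀.ge⟩
  rw [← intervalIntegral.integral_add_adjacent_intervals
    ((hfi.mono (Icc_subset_Icc_right hx₀.2)).intervalIntegrable_of_Icc hx₀.1)
    ((hfi.mono (Icc_subset_Icc_left hx₀.1)).intervalIntegrable_of_Icc hx₀.2)]
  linarith [norm_add_le (∫ x in A..x₀, f x) (∫ x in x₀..B, f x)]

end Splitting

section FirstDerivative

variable {φ φ' φ'' : ℝ → ℝ} {A B c l : ℝ}

lemma integral_cexp_eq_sub_add_integral (hAB : A ≤ B)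
    (hφ : ∀ x ∈ Icc A B, HasDerivAt φ (φ' x) x) (hφ' : ∀ x ∈ Icc A B, HasDerivAt φ' (φ'' x) x)
    (hφ'' : ContinuousOn φ'' (Icc A B)) (hφ'0 : ∀ x ∈ Icc A B, φ' x ≠ 0) (hl : l ≠ 0) :
    ∫ x in A..B, cexp (I * l * φ x) =
      cexp (I * l * φ B) / (I * l * φ' B) - cexp (I * l * φ A) / (I * l * φ' A) +
        ∫ x in A..B, cexp (I * l * φ x) * φ'' x / (I * l * φ' x ^ 2) := by
  have hcont : ContinuousOn (fun x => cexp (I * l * φ x)) (Icc A B) := by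
    have := HasDerivAt.continuousOn hφ
    fun_prop
  have hrem : ContinuousOn (fun x => cexp (I * l * φ x) * φ'' x / (I * l * φ' x ^ 2))
      (Icc A B) := by
    refine (hcont.mul (continuous_ofReal.comp_continuousOn hφ'')).div
      (continuousOn_const.mul ((continuous_ofReal.comp_continuousOn
        (HasDerivAt.continuousOn hφ')).pow 2)) fun x hx => ?_
    simp [I_ne_zero, hl, hφ'0 x hx]
  have hderiv : ∀ x ∈ uIcc A B, HasDerivAt (fun x => cexp (I * l * φ x) / (I * l * φ' x))
      (cexp (I * l * φ x) - cexp (I * l * φ x) * φ'' x / (I * l * φ' x ^ 2)) x := by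
    intro x hx
    rw [uIcc_of_le hAB] at hx
    have hE := (((hφ x hx).ofReal_comp).const_mul (I * l)).cexp
    have hD := ((hφ' x hx).ofReal_comp).const_mul (I * l)
    have hne : (φ' x : ℂ) ≠ 0 := ofReal_ne_zero.2 (hφ'0 x hx)
    refine (hE.div hD (by simp [I_ne_zero, hl, hne])).congr_deriv ?_
    have hl' : (l : ℂ) ≠ 0 := ofReal_ne_zero.2 hl
    field_simp
  rw [← intervalIntegral.integral_eq_sub_of_hasDerivAt hderiv
    ((hcont.sub hrem).intervalIntegrable_of_Icc hAB), intervalIntegral.integral_sub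
    (hcont.intervalIntegrable_of_Icc hAB) (hrem.intervalIntegrable_of_Icc hAB)]
  ring

lemma integral_div_sq_eq_inv_sub_inv (hAB : A ≤ B)
    (hφ' : ∀ x ∈ Icc A B, HasDerivAt φ' (φ'' x) x) (hφ'' : ContinuousOn φ'' (Icc A B))
    (hφ'0 : ∀ x ∈ Icc A B, φ' x ≠ 0) :
    ∫ x in A..B, φ'' x / φ' x ^ 2 = (φ' A)⁻¹ - (φ' B)⁻¹ := by
  have hderiv : ∀ x ∈ uIcc A B, HasDerivAt (fun y => -(φ' y)⁻¹) (φ'' x / φ' x ^ 2) x := by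
    intro x hx
    rw [uIcc_of_le hAB] at hx
    exact ((hφ' x hx).inv (hφ'0 x hx)).neg.congr_deriv (by ring)
  have hint : ContinuousOn (fun x => φ'' x / φ' x ^ 2) (Icc A B) :=
    hφ''.div ((HasDerivAt.continuousOn hφ').pow 2) fun x hx => pow_ne_zero 2 (hφ'0 x hx)
  rw [intervalIntegral.integral_eq_sub_of_hasDerivAt hderiv (hint.intervalIntegrable_of_Icc hAB)]
  ring

lemma norm_integral_cexp_mul_div_sq_le (hAB : A ≤ B)
    (hφ' : ∀ x ∈ Icc A B, HasDerivAt φ' (φ'' x) x) (hφ'' : ContinuousOn φ'' (Icc A B))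
    (hc : 0 < c) (hφ'c : ∀ x ∈ Icc A B, c ≤ |φ' x|) (hφ''0 : ∀ x ∈ Icc A B, 0 ≤ φ'' x) :
    ‖∫ x in A..B, cexp (I * l * φ x) * φ'' x / (I * l * φ' x ^ 2)‖ ≤ (c * |l|)⁻¹ := by
  have hφ'0 : ∀ x ∈ Icc A B, φ' x ≠ 0 := fun x hx => abs_pos.mp (hc.trans_le (hφ'c x hx))
  have hmono : φ' A ≤ φ' B :=
    monotoneOn_of_hasDerivWithinAt_nonneg (convex_Icc A B) (HasDerivAt.continuousOn hφ')
      (fun x hx => (hφ' x (interior_subset hx)).hasDerivWithinAt)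
      (fun x hx => hφ''0 x (interior_subset hx)) ⟨le_rfl, hAB⟩ ⟨hAB, le_rfl⟩ hAB
  calc _ ≤ ∫ x in A..B, ‖cexp (I * l * φ x) * φ'' x / (I * l * φ' x ^ 2)‖ :=
        intervalIntegral.norm_integral_le_integral_norm hAB
    _ = ∫ x in A..B, φ'' x / φ' x ^ 2 / |l| := by
        refine intervalIntegral.integral_congr fun x hx => ?_
        rw [uIcc_of_le hAB] at hx
        rw [norm_div, norm_mul, norm_cexp_I_mul_ofReal_mul]
        simp [abs_of_nonneg (hφ''0 x hx), div_div, mul_comm]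
    _ = ((φ' A)⁻¹ - (φ' B)⁻¹) / |l| := by
        rw [intervalIntegral.integral_div, integral_div_sq_eq_inv_sub_inv hAB hφ' hφ'' hφ'0]
    _ ≤ c⁻¹ / |l| := by
        gcongr
        exact inv_sub_inv_le_of_le_abs hc (hφ'c A ⟨le_rfl, hAB⟩) (hφ'c B ⟨hAB, le_rfl⟩) hmono
    _ = (c * |l|)⁻¹ := by rw [mul_inv, div_eq_mul_inv]

lemma norm_integral_cexp_le_of_le_abs_deriv (hAB : A ≤ B)
    (hφ : ∀ x ∈ Icc A B, HasDerivAt φ (φ' x) x) (hφ' : ∀ x ∈ Icc A B, HasDerivAt φ' (φ'' x) x)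
    (hφ'' : ContinuousOn φ'' (Icc A B)) (hc : 0 < c) (hφ'c : ∀ x ∈ Icc A B, c ≤ |φ' x|)
    (hsign : (∀ x ∈ Icc A B, 0 ≤ φ'' x) ∨ ∀ x ∈ Icc A B, φ'' x ≤ 0) (hl : l ≠ 0) :
    ‖∫ x in A..B, cexp (I * l * φ x)‖ ≤ 3 * (c * |l|)⁻¹ := by
  -- `(-φ, -l)` has the same integrand as `(φ, l)`.
  wlog hφ''0 : ∀ x ∈ Icc A B, 0 ≤ φ'' x generalizing φ φ' φ'' l
  · have := this (φ := fun x => -φ x) (φ' := fun x => -φ' x) (φ'' := fun x => -φ'' x)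
      (fun x hx => (hφ x hx).neg) (fun x hx => (hφ' x hx).neg) hφ''.neg
      (by simpa only [abs_neg] using hφ'c) (Or.inl ?_) (neg_ne_zero.2 hl) ?_
    · simpa using this
    all_goals exact fun x hx => neg_nonneg.2 ((hsign.resolve_left hφ''0) x hx)
  have hφ'0 : ∀ x ∈ Icc A B, φ' x ≠ 0 := fun x hx => abs_pos.mp (hc.trans_le (hφ'c x hx))
  have hbdry : ∀ x ∈ Icc A B, ‖cexp (I * l * φ x) / (I * l * φ' x)‖ ≤ (c * |l|)⁻¹ := by
    intro x hx
    rw [norm_div, norm_cexp_I_mul_ofReal_mul, norm_mul, norm_mul, norm_I, norm_real, norm_real,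
      one_mul, one_div, Real.norm_eq_abs, Real.norm_eq_abs, mul_comm]
    exact inv_anti₀ (by positivity) (mul_le_mul_of_nonneg_right (hφ'c x hx) (abs_nonneg l))
  rw [integral_cexp_eq_sub_add_integral hAB hφ hφ' hφ'' hφ'0 hl]
  calc _ ≤ ‖cexp (I * l * φ B) / (I * l * φ' B)‖ + ‖cexp (I * l * φ A) / (I * l * φ' A)‖ +
        ‖∫ x in A..B, cexp (I * l * φ x) * φ'' x / (I * l * φ' x ^ 2)‖ :=
        (norm_add_le _ _).trans (add_le_add_left (norm_sub_le _ _) _)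
    _ ≤ 3 * (c * |l|)⁻¹ := by
        linarith [hbdry B ⟨hAB, le_rfl⟩, hbdry A ⟨le_rfl, hAB⟩,
          norm_integral_cexp_mul_div_sq_le (l := l) (φ := φ) hAB hφ' hφ'' hc hφ'c hφ''0]

end FirstDerivative

lemma norm_integral_cexp_le_succ_of_forall_subinterval {φ : ℝ → ℝ} {U : Set ℝ} {A B c l C : ℝ}
    {n : ℕ} (hn : n ≠ 0) (hU : IsOpen U) (hAB : A ≤ B) (hABU : Icc A B ⊆ U)
    (hφ : ContDiffOn ℝ (n + 1) φ U) (hc : 0 < c)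
    (hφc : ∀ x ∈ Icc A B, c ≤ |iteratedDerivWithin (n + 1) φ U x|) (hl : l ≠ 0) (hC : 0 ≤ C)
    (hsub : ∀ A' B' δ, A ≤ A' → A' ≤ B' → B' ≤ B → 0 < δ →
      (∀ x ∈ Icc A' B', δ ≤ |iteratedDerivWithin n φ U x|) →
      ‖∫ x in A'..B', cexp (I * l * φ x)‖ ≤ C * (δ * |l|) ^ (-(1 / n : ℝ))) :
    ‖∫ x in A..B, cexp (I * l * φ x)‖ ≤ (2 * C + 2) * (c * |l|) ^ (-(1 / (n + 1) : ℝ)) := by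
  -- `(-φ, -l)` has the same integrand as `(φ, l)`.
  wlog hpos : ∀ x ∈ Icc A B, c ≤ iteratedDerivWithin (n + 1) φ U x generalizing φ l
  · have hcont : ContinuousOn (iteratedDerivWithin (n + 1) φ U) (Icc A B) :=
      (hφ.continuousOn_iteratedDerivWithin le_rfl hU.uniqueDiffOn).mono hABU
    have hneg := (isPreconnected_Icc.forall_le_or_forall_le_neg_of_le_abs hcont hc hφc).resolve_left
      hpos
    have := this (φ := -φ) (l := -l) hφ.neg (by simpa using hφc) (neg_ne_zero.2 hl)
      (by simpa using hsub) (fun x hx => by simpa [le_neg] using hneg x hx)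
    simpa using this
  set t := (c * |l|) ^ (-(1 / (n + 1) : ℝ)) with ht
  have hcl : 0 < c * |l| := mul_pos hc (abs_pos.2 hl)
  have ht0 : 0 < t := Real.rpow_pos_of_pos hcl _
  have hδ : (c * t * |l|) ^ (-(1 / n : ℝ)) = t := by
    rw [mul_right_comm, mul_comm, ht]
    exact rpow_neg_one_div_add_one_mul_self_rpow hcl (by positivity)
  have hderiv : ∀ x ∈ Icc A B,
      HasDerivAt (iteratedDerivWithin n φ U) (iteratedDerivWithin (n + 1) φ U x) x :=
    fun x hx => hasDerivAt_iteratedDerivWithin hU hφ (by exact_mod_cast n.lt_succ_self) (hABU hx)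
  have hfi : ContinuousOn (fun x => cexp (I * l * φ x)) (Icc A B) := by
    have := hφ.continuousOn.mono hABU
    fun_prop
  have := norm_integral_le_of_forall_le_abs_subinterval hAB hfi
    (fun x _ => (norm_cexp_I_mul_ofReal_mul l (φ x)).le) (HasDerivAt.continuousOn hderiv) hc
    (mul_sub_le_sub_of_hasDerivAt hderiv hpos) (mul_pos hc ht0).le (mul_nonneg hC ht0.le)
    fun A' B' hA' hA'B' hB' h => hδ ▸ hsub A' B' (c * t) hA' hA'B' hB' (mul_pos hc ht0) h
  rw [mul_div_cancel_left₀ _ hc.ne'] at this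
  linarith

theorem norm_integral_cexp_le_of_le_abs_iteratedDerivWithin {n : ℕ} (hn : 2 ≤ n) {φ : ℝ → ℝ}
    {U : Set ℝ} {A B c l : ℝ} (hU : IsOpen U) (hAB : A ≤ B) (hABU : Icc A B ⊆ U)
    (hφ : ContDiffOn ℝ n φ U) (hc : 0 < c)
    (hφc : ∀ x ∈ Icc A B, c ≤ |iteratedDerivWithin n φ U x|) (hl : l ≠ 0) :
    ‖∫ x in A..B, cexp (I * l * φ x)‖ ≤ (5 * 2 ^ (n - 1) - 2) * (c * |l|) ^ (-(1 / n : ℝ)) := by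
  induction n, hn using Nat.le_induction generalizing φ A B c with
  | base =>
    have hsign := isPreconnected_Icc.forall_le_or_forall_le_neg_of_le_abs
      ((hφ.continuousOn_iteratedDerivWithin le_rfl hU.uniqueDiffOn).mono hABU) hc hφc
    have := norm_integral_cexp_le_succ_of_forall_subinterval (n := 1) one_ne_zero hU hAB hABU hφ
      hc hφc hl (C := 3) (by norm_num) fun A' B' δ hA' hA'B' hB' hδ hφδ => ?_
    · refine this.trans_eq ?_
      norm_num
    · have hsubAB : Icc A' B' ⊆ Icc A B := Icc_subset_Icc hA' hB'
      rw [Nat.cast_one, div_one, Real.rpow_neg_one]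
      refine norm_integral_cexp_le_of_le_abs_deriv hA'B' (φ' := iteratedDerivWithin 1 φ U)
        (φ'' := iteratedDerivWithin 2 φ U) (fun x hx => ?_) (fun x hx => ?_)
        ((hφ.continuousOn_iteratedDerivWithin le_rfl hU.uniqueDiffOn).mono (hsubAB.trans hABU))
        hδ hφδ (hsign.imp (fun h x hx => hc.le.trans (h x (hsubAB hx)))
          fun h x hx => (h x (hsubAB hx)).trans (by linarith)) hl
      · simpa using hasDerivAt_iteratedDerivWithin (m := 0) hU hφ (by norm_num) (hABU (hsubAB hx))
      · exact hasDerivAt_iteratedDerivWithin (m := 1) hU hφ (by norm_num) (hABU (hsubAB hx))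
  | succ m hm IH =>
    have h2 : (1 : ℝ) ≤ 2 ^ (m - 1) := one_le_pow₀ (by norm_num)
    have := norm_integral_cexp_le_succ_of_forall_subinterval (n := m) (by omega) hU hAB hABU
      (by exact_mod_cast hφ) hc (by exact_mod_cast hφc) hl (C := 5 * 2 ^ (m - 1) - 2)
      (by linarith) fun A' B' δ hA' hA'B' hB' hδ hφδ => IH hA'B'
        ((Icc_subset_Icc hA' hB').trans hABU) (hφ.of_le (Nat.cast_le.2 m.le_succ)) hδ hφδ
    have hpow : (2 : ℝ) ^ (m + 1 - 1) = 2 * 2 ^ (m - 1) := by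
      rw [← pow_succ', Nat.sub_add_cancel (by omega : 1 ≤ m), Nat.add_sub_cancel]
    refine this.trans_eq ?_
    rw [hpow]
    push_cast
    ring

lemma norm_setIntegral_Ioo_le_of_forall_intervalIntegral {E : Type*} [NormedAddCommGroup E]
    [NormedSpace ℝ E] {f : ℝ → E} {a b M : ℝ} (hab : a < b) (hf : IntegrableOn f (Ioo a b))
    (h : ∀ u v, a < u → u ≤ v → v < b → ‖∫ x in u..v, f x‖ ≤ M) :
    ‖∫ x in Ioo a b, f x‖ ≤ M := by
  have ha : Tendsto (fun t : ℝ => a + t) (𝓝[>] 0) (𝓝 a) :=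
    tendsto_nhdsWithin_of_tendsto_nhds (by simpa using (continuous_const_add a).tendsto 0)
  have hb : Tendsto (fun t : ℝ => b - t) (𝓝[>] 0) (𝓝 b) :=
    tendsto_nhdsWithin_of_tendsto_nhds (by simpa using (continuous_sub_left b).tendsto 0)
  refine le_of_tendsto
    ((aecover_Ioo_of_Ioc ha hb).integral_tendsto_of_countably_generated hf).norm ?_
  filter_upwards [Ioo_mem_nhdsGT (show (0 : ℝ) < (b - a) / 2 by linarith)] with t ht
  have hsub : Ioc (a + t) (b - t) ⊆ Ioo a b := fun x hx =>
    ⟨by linarith [hx.1, ht.1], by linarith [hx.2, ht.1]⟩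
  rw [Measure.restrict_restrict_of_subset hsub,
    ← intervalIntegral.integral_of_le (by linarith [ht.2])]
  exact h _ _ (by linarith [ht.1]) (by linarith [ht.2]) (by linarith [ht.1])

/-- Van der Corput lemma with lower bound `c`: if `ψ` is real-valued, `C^k` on `(a,b)` with
`k ≥ 2` and `|ψ^{(k)}| ≥ c > 0` on `(a,b)`, then for every real `λ ≠ 0`,
`|∫_a^b e^{iλψ(x)} dx| ≤ (5·2^{k-1} - 2) c^{-1/k} |λ|^{-1/k}`. -/
theorem van_der_corput_c (k : ℕ) (hk : 2 ≤ k) (c : ℝ) (hc : 0 < c)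
    (a b : ℝ) (hab : a < b) (ψ : ℝ → ℝ)
    (hψ : ContDiffOn ℝ k ψ (Set.Ioo a b))
    (hder : ∀ x ∈ Set.Ioo a b, c ≤ |iteratedDerivWithin k ψ (Set.Ioo a b) x|)
    (lam : ℝ) (hlam : lam ≠ 0) :
    ‖∫ x in Set.Ioo a b, Complex.exp (Complex.I * lam * ψ x)‖
      ≤ (5 * 2 ^ (k - 1) - 2 : ℝ) * c ^ (-(1 / (k : ℝ))) * |lam| ^ (-(1 / (k : ℝ))) := by
  have hint : IntegrableOn (fun x => cexp (I * lam * ψ x)) (Ioo a b) := by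
    refine IntegrableOn.of_bound measure_Ioo_lt_top ?_ 1
      (ae_of_all _ fun x => (norm_cexp_I_mul_ofReal_mul lam (ψ x)).le)
    have := hψ.continuousOn
    exact ContinuousOn.aestronglyMeasurable (by fun_prop) measurableSet_Ioo
  rw [mul_assoc, ← Real.mul_rpow hc.le (abs_nonneg lam)]
  refine norm_setIntegral_Ioo_le_of_forall_intervalIntegral hab hint fun u v hu huv hv => ?_
  have huvab : Icc u v ⊆ Ioo a b := Icc_subset_Ioo hu hv
  exact norm_integral_cexp_le_of_le_abs_iteratedDerivWithin hk isOpen_Ioo huv huvab hψ hc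
    (fun x hx => hder x (huvab hx)) hlam
end
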